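/- Let a ∈ (1/4, 1/2) and b ∈ (1/3, 1/2) satisfy a + 2b > 4/3. Then sup_{(ξ₁,τ₁)∈ℝ²} ⟨−τ₁+ξ₁²⟩^{−b} ( ∫_{G(ξ₁,τ₁)} ξ² ⟨ξ³+(ξ−ξ₁)²−τ₁⟩^{−(2a+2b−1)} dξ )^{1/2} < ∞, where G(ξ₁,τ₁) = {ξ ∈ ℝ : there exists τ with ⟨−τ₁+ξ₁²⟩ ≥ ⟨τ−ξ³⟩ and ⟨−τ₁+ξ₁²⟩ ≥ ⟨τ−τ₁+(ξ−ξ₁)²⟩}. -/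

import Mathlib

/-!
Write `M = ⟨-τ₁ + ξ₁²⟩ = R³`, `s = 2a + 2b - 1` and `φ(ξ) = ξ³ + (ξ - ξ₁)² - τ₁`. The region `G`
lies in `{|φ| ≤ 2M}`, and since `3 - s ≤ 6b` it suffices to bound `∫_{|φ| ≤ 2R³} ξ² ⟨φ⟩^{-s}` by
`C R^{3-s}`. On this set, `ξ² ≤ |φ'|` unless `|ξ| ≤ 2R`. Where `|φ'| ≥ R^{2(1-s)}` this gives
`ξ² ≤ 4 R^{2s} |φ'|`, and the substitution `u = φ(ξ)` on the three monotonicity intervals of the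
cubic `φ` bounds that part by `R^{2s} ∫_{|u| ≤ 2R³} ⟨u⟩^{-s} du ≲ R^{3-s}`. The rest is a sublevel
set `|φ'| < R^{2(1-s)}` of a quadratic, of measure `≤ 2 R^{1-s}`, on which the integrand is at
most `4 R²`.
-/

open MeasureTheory Real Set
open scoped ENNReal

noncomputable section

/-- Japanese bracket `⟨c⟩ = 1 + |c|`. -/
def jb (c : ℝ) : ℝ := 1 + |c|

theorem lintegral_abs_deriv_mul_comp_le {ι : Type*} [Fintype ι] {f f' : ℝ → ℝ}
    (hf : ∀ x, HasDerivAt f (f' x) x) (A : ι → Set ℝ) (hA : ∀ i, MeasurableSet (A i))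
    (hinj : ∀ i, InjOn f (A i)) {T : Set ℝ} (hT : MeasurableSet T) (hTA : T ⊆ ⋃ i, A i)
    (g : ℝ → ℝ≥0∞) :
    ∫⁻ x in T, ENNReal.ofReal |f' x| * g (f x) ≤ Fintype.card ι * ∫⁻ y in f '' T, g y := by
  calc ∫⁻ x in T, ENNReal.ofReal |f' x| * g (f x)
      ≤ ∑ i, ∫⁻ x in T ∩ A i, ENNReal.ofReal |f' x| * g (f x) := by
        conv_lhs => rw [← Set.inter_eq_left.2 hTA, inter_iUnion]
        exact (lintegral_iUnion_le _ _).trans_eq (tsum_fintype _)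
    _ = ∑ i, ∫⁻ y in f '' (T ∩ A i), g y := by
        refine Finset.sum_congr rfl fun i _ => ?_
        rw [lintegral_image_eq_lintegral_abs_deriv_mul (hT.inter (hA i))
          (fun x _ => (hf x).hasDerivWithinAt) ((hinj i).mono inter_subset_right)]
    _ ≤ ∑ _i : ι, ∫⁻ y in f '' T, g y :=
        Finset.sum_le_sum fun i _ => lintegral_mono_set (image_mono inter_subset_left)
    _ = Fintype.card ι * ∫⁻ y in f '' T, g y := by simp

theorem injOn_of_hasDerivAt_eq_mul_sq_sub {f f' : ℝ → ℝ} (hf : ∀ x, HasDerivAt f (f' x) x)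
    {k c D : ℝ} (hk : 0 < k) (hf' : ∀ x, f' x = k * ((x - c) ^ 2 - D)) :
    InjOn f (Iic (c - √D)) ∧ InjOn f (Icc (c - √D) (c + √D)) ∧ InjOn f (Ici (c + √D)) := by
  have hcont : Continuous f := continuous_iff_continuousAt.2 fun x => (hf x).continuousAt
  have hderiv : ∀ x, deriv f x = k * ((x - c) ^ 2 - D) := fun x => (hf x).deriv.trans (hf' x)
  have hpos : ∀ x, √D < |x - c| → 0 < deriv f x := fun x hx => by
    have := (sqrt_lt' ((sqrt_nonneg D).trans_lt hx)).1 hx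
    rw [sq_abs] at this
    rw [hderiv]
    exact mul_pos hk (by linarith)
  refine ⟨(strictMonoOn_of_deriv_pos (convex_Iic _) hcont.continuousOn
      fun x hx => hpos x ?_).injOn,
    (strictAntiOn_of_deriv_neg (convex_Icc _ _) hcont.continuousOn
      fun x hx => ?_).injOn,
    (strictMonoOn_of_deriv_pos (convex_Ici _) hcont.continuousOn
      fun x hx => hpos x ?_).injOn⟩
  · rw [interior_Iic] at hx
    exact lt_abs.2 (Or.inr (by linarith [hx.out]))
  · rw [interior_Icc] at hx
    have hxc : |x - c| < √D := abs_lt.2 ⟨by linarith [hx.1], by linarith [hx.2]⟩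
    have := (lt_sqrt (abs_nonneg _)).1 hxc
    rw [sq_abs] at this
    rw [hderiv]
    exact mul_neg_of_pos_of_neg hk (by linarith)
  · rw [interior_Ici] at hx
    exact lt_abs.2 (Or.inl (by linarith [hx.out]))

theorem volume_setOf_abs_sq_sub_lt_le (c D : ℝ) {h : ℝ} (hh : 0 ≤ h) :
    volume {x : ℝ | |(x - c) ^ 2 - D| < h} ≤ ENNReal.ofReal (2 * √(2 * h)) := by
  set p := √(D - h)
  set q := √(D + h)
  have hpq : p ≤ q := sqrt_le_sqrt (by linarith)
  have hqp : q - p ≤ √(2 * h) := by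
    refine (le_abs_self _).trans (abs_le_sqrt ?_)
    have hsq : q ^ 2 ≤ p ^ 2 + 2 * h := by
      rw [sq_sqrt', sq_sqrt']
      exact max_le (by linarith [le_max_left (D - h) 0]) (by linarith [le_max_right (D - h) 0])
    nlinarith [sqrt_nonneg (D - h)]
  have hsub : {x : ℝ | |(x - c) ^ 2 - D| < h} ⊆ Icc (c - q) (c - p) ∪ Icc (c + p) (c + q) := by
    intro x hx
    obtain ⟨hlo, hhi⟩ := abs_lt.1 hx.out
    have hle : |x - c| ≤ q := abs_le_sqrt (by linarith)
    have hge : p ≤ |x - c| := by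
      rw [← sqrt_sq_eq_abs]
      exact sqrt_le_sqrt (by linarith)
    rcases le_total 0 (x - c) with hxc | hxc
    · rw [abs_of_nonneg hxc] at hle hge
      exact Or.inr ⟨by linarith, by linarith⟩
    · rw [abs_of_nonpos hxc] at hle hge
      exact Or.inl ⟨by linarith, by linarith⟩
  calc volume {x : ℝ | |(x - c) ^ 2 - D| < h}
      ≤ volume (Icc (c - q) (c - p)) + volume (Icc (c + p) (c + q)) :=
        (measure_mono hsub).trans (measure_union_le _ _)
    _ = ENNReal.ofReal (q - p) + ENNReal.ofReal (q - p) := by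
        rw [Real.volume_Icc, Real.volume_Icc]
        ring_nf
    _ ≤ ENNReal.ofReal (2 * √(2 * h)) := by
        rw [← ENNReal.ofReal_add (by linarith) (by linarith), two_mul]
        exact ENNReal.ofReal_le_ofReal (by linarith)

theorem setIntegral_le_of_lintegral_le {α : Type*} [MeasurableSpace α] {μ : Measure α}
    {f : α → ℝ} {S T : Set α} (hf : AEStronglyMeasurable f (μ.restrict S)) (hf0 : ∀ x, 0 ≤ f x)
    (hST : S ⊆ T) {c : ℝ} (hc : 0 ≤ c) (h : ∫⁻ x in T, ENNReal.ofReal (f x) ∂μ ≤ ENNReal.ofReal c) :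
    ∫ x in S, f x ∂μ ≤ c := by
  rw [integral_eq_lintegral_of_nonneg_ae (ae_of_all _ hf0) hf]
  exact ENNReal.toReal_le_of_le_ofReal hc ((lintegral_mono_set hST).trans h)

theorem rpow_mul_rpow_one_sub {R : ℝ} (hR : 0 < R) (s : ℝ) : R ^ s * R ^ (1 - s) = R := by
  rw [← rpow_add hR, add_sub_cancel, rpow_one]

theorem sq_mul_rpow_one_sub {R : ℝ} (hR : 0 < R) (s : ℝ) : R ^ 2 * R ^ (1 - s) = R ^ (3 - s) := by
  rw [← rpow_two, ← rpow_add hR]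
  ring_nf

theorem rpow_neg_mul_rpow_half_le {M I K b e : ℝ} (hM : 1 ≤ M) (hI : 0 ≤ I)
    (hIK : I ≤ K * M ^ e) (he : e ≤ 2 * b) : M ^ (-b) * I ^ (1 / 2 : ℝ) ≤ K ^ (1 / 2 : ℝ) := by
  have hM0 : 0 < M := by linarith
  have hK : 0 ≤ K := nonneg_of_mul_nonneg_left (hI.trans hIK) (rpow_pos_of_pos hM0 e)
  calc M ^ (-b) * I ^ (1 / 2 : ℝ) ≤ M ^ (-b) * (K * M ^ e) ^ (1 / 2 : ℝ) := by gcongr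
    _ = K ^ (1 / 2 : ℝ) * M ^ (e / 2 - b) := by
        rw [mul_rpow hK (rpow_nonneg hM0.le _), ← rpow_mul hM0.le, mul_left_comm,
          ← rpow_add hM0]
        ring_nf
    _ ≤ K ^ (1 / 2 : ℝ) := by
        refine mul_le_of_le_one_right (rpow_nonneg hK _) ?_
        exact rpow_le_one_of_one_le_of_nonpos hM (by linarith)

theorem one_le_jb (c : ℝ) : 1 ≤ jb c := le_add_of_nonneg_right (abs_nonneg c)

theorem jb_pos (c : ℝ) : 0 < jb c := one_pos.trans_le (one_le_jb c)

theorem continuous_jb : Continuous jb := continuous_const.add continuous_abs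

theorem lintegral_Icc_jb_rpow_neg_le {s Y : ℝ} (hs : s < 1) (hY : 0 ≤ Y) :
    ∫⁻ u in Icc (-Y) Y, ENNReal.ofReal (jb u ^ (-s)) ≤
      ENNReal.ofReal (2 * (1 + Y) ^ (1 - s) / (1 - s)) := by
  have hcont : Continuous fun u => jb u ^ (-s) :=
    continuous_jb.rpow_const fun u => Or.inl (jb_pos u).ne'
  rw [← ofReal_integral_eq_lintegral_ofReal hcont.integrableOn_Icc
    (ae_of_all _ fun u => rpow_nonneg (jb_pos u).le _)]
  refine ENNReal.ofReal_le_ofReal ?_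
  have hhalf : ∫ u in (0 : ℝ)..Y, jb u ^ (-s) = ((1 + Y) ^ (1 - s) - 1) / (1 - s) := by
    rw [intervalIntegral.integral_congr (g := fun u => (1 + u) ^ (-s)) fun u hu => by
      rw [uIcc_of_le hY] at hu
      simp only [jb, abs_of_nonneg hu.1]]
    rw [intervalIntegral.integral_comp_add_left (fun u => u ^ (-s)),
      integral_rpow (Or.inl (by linarith)), add_zero, one_rpow, neg_add_eq_sub]
  have heven : ∫ u in -Y..0, jb u ^ (-s) = ∫ u in (0 : ℝ)..Y, jb u ^ (-s) := by
    simpa [jb] using (intervalIntegral.integral_comp_neg (a := 0) (b := Y)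
      (fun u => jb u ^ (-s))).symm
  rw [integral_Icc_eq_integral_Ioc, ← intervalIntegral.integral_of_le (by linarith),
    ← intervalIntegral.integral_add_adjacent_intervals (b := 0) (hcont.intervalIntegrable _ _)
      (hcont.intervalIntegrable _ _), heven, hhalf]
  have : 0 < 1 - s := by linarith
  rw [← two_mul, mul_div_assoc]
  gcongr
  linarith

def resonance (ξ₁ τ₁ ξ : ℝ) : ℝ := ξ ^ 3 + (ξ - ξ₁) ^ 2 - τ₁

theorem hasDerivAt_resonance (ξ₁ τ₁ ξ : ℝ) :
    HasDerivAt (resonance ξ₁ τ₁) (3 * ξ ^ 2 + 2 * (ξ - ξ₁)) ξ := by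
  refine (((hasDerivAt_pow 3 ξ).add (((hasDerivAt_id ξ).sub_const ξ₁).pow 2)).sub_const
    τ₁).congr_deriv ?_
  simp only [id]
  ring

theorem continuous_resonance (ξ₁ τ₁ : ℝ) : Continuous (resonance ξ₁ τ₁) := by
  unfold resonance
  fun_prop

theorem sq_le_abs_deriv_resonance_or_abs_le {ξ₁ τ₁ R ξ : ℝ} (hR : 1 ≤ R)
    (hξ₁ : |ξ₁ ^ 2 - τ₁| ≤ R ^ 3) (hξ : |resonance ξ₁ τ₁ ξ| ≤ 2 * R ^ 3) :
    ξ ^ 2 ≤ |3 * ξ ^ 2 + 2 * (ξ - ξ₁)| ∨ |ξ| ≤ 2 * R := by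
  by_contra! ⟨hsmall, hbig⟩
  have hfactor : |ξ| * |ξ ^ 2 + ξ - 2 * ξ₁| ≤ 3 * R ^ 3 := by
    rw [← abs_mul]
    calc |ξ * (ξ ^ 2 + ξ - 2 * ξ₁)| = |resonance ξ₁ τ₁ ξ - (ξ₁ ^ 2 - τ₁)| := by
          unfold resonance; ring_nf
      _ ≤ |resonance ξ₁ τ₁ ξ| + |ξ₁ ^ 2 - τ₁| := abs_sub _ _
      _ ≤ 3 * R ^ 3 := by linarith
  have hlower : ξ ^ 2 - |ξ| ≤ |ξ ^ 2 + ξ - 2 * ξ₁| := by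
    have := (abs_lt.1 hsmall).2
    linarith [neg_abs_le ξ, neg_le_abs (ξ ^ 2 + ξ - 2 * ξ₁)]
  have hcube : |ξ| ^ 3 - |ξ| ^ 2 ≤ 3 * R ^ 3 := by
    have := (mul_le_mul_of_nonneg_left hlower (abs_nonneg ξ)).trans hfactor
    rw [← sq_abs ξ] at this
    linarith
  have h8 : (2 * R) ^ 3 < |ξ| ^ 3 := pow_lt_pow_left₀ hbig (by linarith) (by norm_num)
  nlinarith [sq_nonneg |ξ|, sq_nonneg R]

theorem sq_le_mul_abs_deriv_resonance {s R ξ₁ τ₁ ξ : ℝ} (hs0 : 0 ≤ s) (hR : 1 ≤ R)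
    (hξ₁ : |ξ₁ ^ 2 - τ₁| ≤ R ^ 3) (hξ : |resonance ξ₁ τ₁ ξ| ≤ 2 * R ^ 3)
    (hlarge : (R ^ (1 - s)) ^ 2 ≤ |3 * ξ ^ 2 + 2 * (ξ - ξ₁)|) :
    ξ ^ 2 ≤ 4 * (R ^ s) ^ 2 * |3 * ξ ^ 2 + 2 * (ξ - ξ₁)| := by
  rcases sq_le_abs_deriv_resonance_or_abs_le hR hξ₁ hξ with h | h
  · exact h.trans (le_mul_of_one_le_left (abs_nonneg _) (by nlinarith [one_le_rpow hR hs0]))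
  · calc ξ ^ 2 = |ξ| ^ 2 := (sq_abs ξ).symm
      _ ≤ (2 * (R ^ s * R ^ (1 - s))) ^ 2 := by rw [rpow_mul_rpow_one_sub (by linarith)]; gcongr
      _ = 4 * (R ^ s) ^ 2 * (R ^ (1 - s)) ^ 2 := by ring
      _ ≤ 4 * (R ^ s) ^ 2 * |3 * ξ ^ 2 + 2 * (ξ - ξ₁)| := by gcongr

theorem lintegral_abs_deriv_resonance_mul_comp_le (ξ₁ τ₁ : ℝ) {T : Set ℝ} (hT : MeasurableSet T)
    (g : ℝ → ℝ≥0∞) :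
    ∫⁻ ξ in T, ENNReal.ofReal |3 * ξ ^ 2 + 2 * (ξ - ξ₁)| * g (resonance ξ₁ τ₁ ξ) ≤
      3 * ∫⁻ u in resonance ξ₁ τ₁ '' T, g u := by
  obtain ⟨hinj₁, hinj₂, hinj₃⟩ := injOn_of_hasDerivAt_eq_mul_sq_sub
    (hasDerivAt_resonance ξ₁ τ₁) (k := 3) (c := -1 / 3) (D := 1 / 9 + 2 * ξ₁ / 3)
    (by norm_num) fun ξ => by ring
  set r := -1 / 3 - √(1 / 9 + 2 * ξ₁ / 3)
  set p := -1 / 3 + √(1 / 9 + 2 * ξ₁ / 3)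
  have hcover : T ⊆ ⋃ i, ![Iic r, Icc r p, Ici p] i := fun ξ _ => by
    rcases le_or_gt ξ r with h | h
    · exact mem_iUnion.2 ⟨0, h⟩
    rcases le_or_gt ξ p with h' | h'
    · exact mem_iUnion.2 ⟨1, h.le, h'⟩
    · exact mem_iUnion.2 ⟨2, h'.le⟩
  simpa using lintegral_abs_deriv_mul_comp_le (hasDerivAt_resonance ξ₁ τ₁)
    ![Iic r, Icc r p, Ici p] (fun i => by fin_cases i <;> simp)
    (fun i => by fin_cases i <;> assumption) hT hcover g

section

variable {s R ξ₁ τ₁ : ℝ}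

theorem lintegral_resonance_le_of_le_abs_deriv (hs0 : 0 ≤ s) (hs1 : s < 1) (hR : 1 ≤ R)
    (hξ₁ : |ξ₁ ^ 2 - τ₁| ≤ R ^ 3) :
    ∫⁻ ξ in {ξ | |resonance ξ₁ τ₁ ξ| ≤ 2 * R ^ 3} ∩
        {ξ | (R ^ (1 - s)) ^ 2 ≤ |3 * ξ ^ 2 + 2 * (ξ - ξ₁)|},
      ENNReal.ofReal (ξ ^ 2 * jb (resonance ξ₁ τ₁ ξ) ^ (-s)) ≤
      ENNReal.ofReal (72 / (1 - s) * R ^ (3 - s)) := by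
  set T := {ξ | |resonance ξ₁ τ₁ ξ| ≤ 2 * R ^ 3} ∩
    {ξ | (R ^ (1 - s)) ^ 2 ≤ |3 * ξ ^ 2 + 2 * (ξ - ξ₁)|}
  set W := 4 * (R ^ s) ^ 2
  have hR0 : 0 < R := by linarith
  have h1s : 0 < 1 - s := by linarith
  have hT : MeasurableSet T :=
    (measurableSet_le (continuous_resonance ξ₁ τ₁).abs.measurable measurable_const).inter
      (measurableSet_le measurable_const (by fun_prop))
  have himage : resonance ξ₁ τ₁ '' T ⊆ Icc (-(2 * R ^ 3)) (2 * R ^ 3) :=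
    image_subset_iff.2 fun ξ hξ => abs_le.1 hξ.1
  have hbase : (1 + 2 * R ^ 3) ^ (1 - s) ≤ 3 * (R ^ (1 - s)) ^ 3 :=
    calc (1 + 2 * R ^ 3) ^ (1 - s) ≤ (3 * R ^ 3) ^ (1 - s) :=
          rpow_le_rpow (by positivity) (by nlinarith [one_le_pow₀ (n := 3) hR]) h1s.le
      _ = 3 ^ (1 - s) * (R ^ (1 - s)) ^ 3 := by
          rw [mul_rpow (by norm_num) (by positivity), rpow_pow_comm hR0.le]
      _ ≤ 3 * (R ^ (1 - s)) ^ 3 := by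
          gcongr
          exact rpow_le_self_of_one_le (by norm_num) (by linarith)
  have hexp : W * (R ^ (1 - s)) ^ 3 = 4 * R ^ (3 - s) := by
    rw [show W * (R ^ (1 - s)) ^ 3 = 4 * ((R ^ s * R ^ (1 - s)) ^ 2 * R ^ (1 - s)) by ring,
      rpow_mul_rpow_one_sub hR0, sq_mul_rpow_one_sub hR0]
  calc ∫⁻ ξ in T, ENNReal.ofReal (ξ ^ 2 * jb (resonance ξ₁ τ₁ ξ) ^ (-s))
      ≤ ∫⁻ ξ in T, ENNReal.ofReal W * (ENNReal.ofReal |3 * ξ ^ 2 + 2 * (ξ - ξ₁)| *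
          ENNReal.ofReal (jb (resonance ξ₁ τ₁ ξ) ^ (-s))) := by
        refine setLIntegral_mono' hT fun ξ hξ => ?_
        rw [← ENNReal.ofReal_mul (abs_nonneg _), ← ENNReal.ofReal_mul (by positivity), ← mul_assoc]
        gcongr
        · exact rpow_nonneg (jb_pos _).le _
        · exact sq_le_mul_abs_deriv_resonance hs0 hR hξ₁ hξ.1 hξ.2
    _ = ENNReal.ofReal W * ∫⁻ ξ in T, ENNReal.ofReal |3 * ξ ^ 2 + 2 * (ξ - ξ₁)| *
          ENNReal.ofReal (jb (resonance ξ₁ τ₁ ξ) ^ (-s)) :=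
        lintegral_const_mul' _ _ ENNReal.ofReal_ne_top
    _ ≤ ENNReal.ofReal W * (3 * ∫⁻ u in resonance ξ₁ τ₁ '' T, ENNReal.ofReal (jb u ^ (-s))) := by
        gcongr
        exact lintegral_abs_deriv_resonance_mul_comp_le ξ₁ τ₁ hT _
    _ ≤ ENNReal.ofReal W * (3 * ENNReal.ofReal (2 * (1 + 2 * R ^ 3) ^ (1 - s) / (1 - s))) := by
        gcongr
        exact (lintegral_mono_set himage).trans (lintegral_Icc_jb_rpow_neg_le hs1 (by positivity))
    _ ≤ ENNReal.ofReal (72 / (1 - s) * R ^ (3 - s)) := by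
        rw [← ENNReal.ofReal_ofNat 3, ← ENNReal.ofReal_mul (by norm_num),
          ← ENNReal.ofReal_mul (by positivity)]
        refine ENNReal.ofReal_le_ofReal ?_
        calc W * (3 * (2 * (1 + 2 * R ^ 3) ^ (1 - s) / (1 - s)))
            ≤ W * (3 * (2 * (3 * (R ^ (1 - s)) ^ 3) / (1 - s))) := by gcongr
          _ = 18 / (1 - s) * (W * (R ^ (1 - s)) ^ 3) := by ring
          _ = 72 / (1 - s) * R ^ (3 - s) := by rw [hexp]; ring

theorem lintegral_resonance_le_of_abs_deriv_lt (hs0 : 0 ≤ s) (hR : 1 ≤ R)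
    (hξ₁ : |ξ₁ ^ 2 - τ₁| ≤ R ^ 3) :
    ∫⁻ ξ in {ξ | |resonance ξ₁ τ₁ ξ| ≤ 2 * R ^ 3} ∩
        {ξ | |3 * ξ ^ 2 + 2 * (ξ - ξ₁)| < (R ^ (1 - s)) ^ 2},
      ENNReal.ofReal (ξ ^ 2 * jb (resonance ξ₁ τ₁ ξ) ^ (-s)) ≤
      ENNReal.ofReal (8 * R ^ (3 - s)) := by
  set T := {ξ | |resonance ξ₁ τ₁ ξ| ≤ 2 * R ^ 3} ∩
    {ξ | |3 * ξ ^ 2 + 2 * (ξ - ξ₁)| < (R ^ (1 - s)) ^ 2}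
  set σ := R ^ (1 - s)
  have hσ0 : 0 ≤ σ := rpow_nonneg (by linarith) _
  have hσR : σ ≤ R := rpow_le_self_of_one_le hR (by linarith)
  have hpt : ∀ ξ ∈ T, ξ ^ 2 * jb (resonance ξ₁ τ₁ ξ) ^ (-s) ≤ 4 * R ^ 2 := by
    rintro ξ ⟨hξ, hsmall⟩
    have hsq : ξ ^ 2 ≤ 4 * R ^ 2 := by
      rcases sq_le_abs_deriv_resonance_or_abs_le hR hξ₁ hξ with h | h
      · nlinarith [hsmall.out]
      · nlinarith [sq_abs ξ, abs_nonneg ξ]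
    have hjb : jb (resonance ξ₁ τ₁ ξ) ^ (-s) ≤ 1 :=
      rpow_le_one_of_one_le_of_nonpos (one_le_jb _) (by linarith)
    nlinarith [sq_nonneg ξ]
  have hvol : volume T ≤ ENNReal.ofReal (2 * σ) :=
    calc volume T ≤ volume {ξ : ℝ | |(ξ - -1 / 3) ^ 2 - (1 / 9 + 2 * ξ₁ / 3)| < σ ^ 2 / 2} := by
          refine measure_mono fun ξ hξ => ?_
          have := hξ.2.out
          rw [show 3 * ξ ^ 2 + 2 * (ξ - ξ₁) = 3 * ((ξ - -1 / 3) ^ 2 - (1 / 9 + 2 * ξ₁ / 3)) by ring,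
            abs_mul, abs_of_pos (by norm_num : (0 : ℝ) < 3)] at this
          show |(ξ - -1 / 3) ^ 2 - (1 / 9 + 2 * ξ₁ / 3)| < σ ^ 2 / 2
          nlinarith [abs_nonneg ((ξ - -1 / 3) ^ 2 - (1 / 9 + 2 * ξ₁ / 3))]
      _ ≤ ENNReal.ofReal (2 * √(2 * (σ ^ 2 / 2))) :=
          volume_setOf_abs_sq_sub_lt_le _ _ (by positivity)
      _ = ENNReal.ofReal (2 * σ) := by
          rw [mul_div_cancel₀ _ two_ne_zero, sqrt_sq hσ0]
  calc ∫⁻ ξ in T, ENNReal.ofReal (ξ ^ 2 * jb (resonance ξ₁ τ₁ ξ) ^ (-s))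
      ≤ ∫⁻ _ in T, ENNReal.ofReal (4 * R ^ 2) :=
        setLIntegral_mono measurable_const fun ξ hξ => ENNReal.ofReal_le_ofReal (hpt ξ hξ)
    _ = ENNReal.ofReal (4 * R ^ 2) * volume T := setLIntegral_const _ _
    _ ≤ ENNReal.ofReal (4 * R ^ 2) * ENNReal.ofReal (2 * σ) := by gcongr
    _ = ENNReal.ofReal (8 * (R ^ 2 * σ)) := by rw [← ENNReal.ofReal_mul (by positivity)]; ring_nf
    _ = ENNReal.ofReal (8 * R ^ (3 - s)) := by rw [sq_mul_rpow_one_sub (by linarith)]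

theorem lintegral_sq_mul_jb_resonance_le (hs0 : 0 ≤ s) (hs1 : s < 1) (hR : 1 ≤ R)
    (hξ₁ : |ξ₁ ^ 2 - τ₁| ≤ R ^ 3) :
    ∫⁻ ξ in {ξ | |resonance ξ₁ τ₁ ξ| ≤ 2 * R ^ 3},
      ENNReal.ofReal (ξ ^ 2 * jb (resonance ξ₁ τ₁ ξ) ^ (-s)) ≤
      ENNReal.ofReal ((72 / (1 - s) + 8) * R ^ (3 - s)) := by
  set T := {ξ | |resonance ξ₁ τ₁ ξ| ≤ 2 * R ^ 3}
  have h1s : 0 < 1 - s := by linarith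
  have hsplit : T ⊆ T ∩ {ξ | (R ^ (1 - s)) ^ 2 ≤ |3 * ξ ^ 2 + 2 * (ξ - ξ₁)|} ∪
      T ∩ {ξ | |3 * ξ ^ 2 + 2 * (ξ - ξ₁)| < (R ^ (1 - s)) ^ 2} := fun ξ hξ =>
    (le_or_gt ((R ^ (1 - s)) ^ 2) |3 * ξ ^ 2 + 2 * (ξ - ξ₁)|).imp (⟨hξ, ·⟩) (⟨hξ, ·⟩)
  calc ∫⁻ ξ in T, ENNReal.ofReal (ξ ^ 2 * jb (resonance ξ₁ τ₁ ξ) ^ (-s))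
      ≤ ENNReal.ofReal (72 / (1 - s) * R ^ (3 - s)) + ENNReal.ofReal (8 * R ^ (3 - s)) :=
        (lintegral_mono_set hsplit).trans <| (lintegral_union_le _ _ _).trans <|
          add_le_add (lintegral_resonance_le_of_le_abs_deriv hs0 hs1 hR hξ₁)
            (lintegral_resonance_le_of_abs_deriv_lt hs0 hR hξ₁)
    _ = ENNReal.ofReal ((72 / (1 - s) + 8) * R ^ (3 - s)) := by
        rw [← ENNReal.ofReal_add (by positivity) (by positivity), add_mul]

end

theorem setOf_exists_jb_le_subset (ξ₁ τ₁ : ℝ) :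
    {ξ : ℝ | ∃ τ : ℝ, jb (τ - ξ ^ 3) ≤ jb (-τ₁ + ξ₁ ^ 2) ∧
      jb (τ - τ₁ + (ξ - ξ₁) ^ 2) ≤ jb (-τ₁ + ξ₁ ^ 2)} ⊆
      {ξ | |resonance ξ₁ τ₁ ξ| ≤ 2 * jb (-τ₁ + ξ₁ ^ 2)} := by
  rintro ξ ⟨τ, h₁, h₂⟩
  unfold jb at h₁ h₂
  calc |resonance ξ₁ τ₁ ξ| = |(τ - τ₁ + (ξ - ξ₁) ^ 2) - (τ - ξ ^ 3)| := by
        unfold resonance; ring_nf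
    _ ≤ |τ - τ₁ + (ξ - ξ₁) ^ 2| + |τ - ξ ^ 3| := abs_sub _ _
    _ ≤ 2 * jb (-τ₁ + ξ₁ ^ 2) := by unfold jb; linarith [abs_nonneg (-τ₁ + ξ₁ ^ 2)]

theorem setIntegral_sq_mul_jb_resonance_le {s : ℝ} (hs0 : 0 ≤ s) (hs1 : s < 1) (ξ₁ τ₁ : ℝ) :
    ∫ ξ in {ξ : ℝ | ∃ τ : ℝ, jb (τ - ξ ^ 3) ≤ jb (-τ₁ + ξ₁ ^ 2) ∧
        jb (τ - τ₁ + (ξ - ξ₁) ^ 2) ≤ jb (-τ₁ + ξ₁ ^ 2)},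
      ξ ^ 2 * jb (resonance ξ₁ τ₁ ξ) ^ (-s) ≤
      (72 / (1 - s) + 8) * jb (-τ₁ + ξ₁ ^ 2) ^ (1 - s / 3) := by
  set M := jb (-τ₁ + ξ₁ ^ 2)
  set R := M ^ (3⁻¹ : ℝ)
  have hR3 : R ^ 3 = M := by simpa using rpow_inv_natCast_pow (n := 3) (jb_pos _).le (by norm_num)
  have hR : 1 ≤ R := one_le_rpow (one_le_jb _) (by norm_num)
  have hξ₁ : |ξ₁ ^ 2 - τ₁| ≤ R ^ 3 := by
    rw [hR3, show ξ₁ ^ 2 - τ₁ = -τ₁ + ξ₁ ^ 2 by ring]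
    exact le_add_of_nonneg_left zero_le_one
  have hbound := lintegral_sq_mul_jb_resonance_le hs0 hs1 hR hξ₁
  rw [hR3, ← rpow_mul (jb_pos _).le, show (3⁻¹ : ℝ) * (3 - s) = 1 - s / 3 by ring] at hbound
  have hf0 : ∀ ξ, 0 ≤ ξ ^ 2 * jb (resonance ξ₁ τ₁ ξ) ^ (-s) :=
    fun ξ => mul_nonneg (sq_nonneg ξ) (rpow_nonneg (jb_pos _).le _)
  have hf : Continuous fun ξ => ξ ^ 2 * jb (resonance ξ₁ τ₁ ξ) ^ (-s) :=
    (continuous_pow 2).mul ((continuous_jb.comp (continuous_resonance ξ₁ τ₁)).rpow_const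
      fun ξ => Or.inl (jb_pos _).ne')
  have hK : 0 < 72 / (1 - s) + 8 := by
    have : 0 < 1 - s := by linarith
    positivity
  exact setIntegral_le_of_lintegral_le hf.aestronglyMeasurable hf0
    (setOf_exists_jb_le_subset ξ₁ τ₁) (mul_nonneg hK.le (rpow_nonneg (jb_pos _).le _)) hbound

/-- Region II estimate (after integrating out `τ`) in the proof of
`‖∂ₓ(g h̄)‖_{Y_{-a,1}} ≤ C‖g‖_{X_{b,1}}‖h‖_{X_{b,1}}`: for `a ∈ (1/4,1/2)`, `b ∈ (1/3,1/2)`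
with `a + 2b > 4/3`, the sup over `(ξ₁,τ₁)` of
`⟨-τ₁+ξ₁²⟩^{-b} (∫_{G(ξ₁,τ₁)} ξ² ⟨ξ³+(ξ-ξ₁)²-τ₁⟩^{-(2a+2b-1)} dξ)^{1/2}` is finite, where
`G(ξ₁,τ₁)` consists of `ξ` for which there exists `τ` with `⟨-τ₁+ξ₁²⟩ ≥ ⟨τ-ξ³⟩` and
`⟨-τ₁+ξ₁²⟩ ≥ ⟨τ-τ₁+(ξ-ξ₁)²⟩`. -/
theorem stmt9 (a b : ℝ) (ha : a ∈ Set.Ioo (1/4 : ℝ) (1/2)) (hb : b ∈ Set.Ioo (1/3 : ℝ) (1/2))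
    (hab : 4/3 < a + 2 * b) :
    ∃ C : ℝ, ∀ ξ₁ τ₁ : ℝ,
      jb (-τ₁ + ξ₁ ^ 2) ^ (-b) *
        (∫ ξ in {ξ : ℝ | ∃ τ : ℝ,
            jb (τ - ξ ^ 3) ≤ jb (-τ₁ + ξ₁ ^ 2) ∧
            jb (τ - τ₁ + (ξ - ξ₁) ^ 2) ≤ jb (-τ₁ + ξ₁ ^ 2)},
          ξ ^ 2 * jb (ξ ^ 3 + (ξ - ξ₁) ^ 2 - τ₁) ^ (-(2 * a + 2 * b - 1))) ^ (1/2 : ℝ)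
        ≤ C := by
  obtain ⟨-, ha₂⟩ := ha
  obtain ⟨hb₁, hb₂⟩ := hb
  refine ⟨(72 / (1 - (2 * a + 2 * b - 1)) + 8) ^ (1 / 2 : ℝ), fun ξ₁ τ₁ => ?_⟩
  exact rpow_neg_mul_rpow_half_le (one_le_jb _)
    (integral_nonneg fun ξ => mul_nonneg (sq_nonneg ξ) (rpow_nonneg (jb_pos _).le _))
    (setIntegral_sq_mul_jb_resonance_le (by linarith) (by linarith) ξ₁ τ₁) (by linarith)
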